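/- arXiv:1911.00319 — 8 statements merged into one kernel-verified Lean document; each statement's English description precedes it below -/
import Mathlib

section
/- Theorem 1, case B⁺₁,₌,<: Assume there exist a > 0, τ > 0 and continuously differentiable functions bᵤ, bₗ : [0,a] → ℝ with bᵤ(0) = bₗ(0) = 0, bᵤ'(0) = 0 and bᵤ convex on [0,a], bₗ'(x) ≤ −τ for all x ∈ [0,a], such that (x, bᵤ(x)) ∈ Ĝ and (x, bₗ(x)) ∈ Ĝ for every x ∈ (0,a], the boundary condition (5⁺ᵤ) holds: f₀(x, bᵤ(x)) ≤ bᵤ'(x) for all x ∈ (0,a], and there exists c ∈ (0,a] such that every point (x,y) with 0 < x ≤ c and bₗ(x) < y < bᵤ(x) belongs to G. Then there exist h ∈ (0,c] and a function φ : [0,h] → ℝ with φ(0) = 0 which is a solution of y' = f₀(x,y) with graph in G̃ on [0,h]. -/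
/-!
Between the graphs of `bl ≤ 0 ≤ bu` (the sign of `bu` comes from convexity and `bu'(0) = 0`)
replace `f₀` by its composition with the retraction onto the region between the graphs, and solve
the resulting bounded continuous equation by Peano's theorem. Beyond each graph the modified field
equals `f₀` on that graph, so the boundary conditions `f₀(x, bu x) ≤ bu' x` and
`bl' x ≤ -τ ≤ f₀(x, bl x)` (the latter near `0`, by continuity) make the graphs barriers: the
solution stays in the region, where the modified field is `f₀` itself.

Peano's theorem is proved by monotone approximation: the `n`-Lipschitz lower envelopes of the field
increase with `n`, so by comparison their Picard–Lindelöf solutions increase, and by dominated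
convergence their pointwise limit solves the integral equation of the original field.
-/

open Set Filter Topology NNReal

section LipschitzLowerEnvelope

variable {X : Type*} [PseudoMetricSpace X]

/-- Pasch–Hausdorff envelope: for `F` bounded below, the largest `k`-Lipschitz minorant of `F`. -/
noncomputable def lipschitzLowerEnvelope (F : X → ℝ) (k : ℝ≥0) (p : X) : ℝ :=
  ⨅ q, F q + k * dist p q

variable {F : X → ℝ} {m : ℝ}

lemma bddBelow_range_add_mul_dist (hm : ∀ q, m ≤ F q) (k : ℝ≥0) (p : X) :
    BddBelow (range fun q => F q + k * dist p q) :=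
  ⟨m, by rintro _ ⟨q, rfl⟩; exact le_add_of_le_of_nonneg (hm q) (by positivity)⟩

lemma le_lipschitzLowerEnvelope (hm : ∀ q, m ≤ F q) (k : ℝ≥0) (p : X) :
    m ≤ lipschitzLowerEnvelope F k p :=
  have : Nonempty X := ⟨p⟩
  le_ciInf fun q => le_add_of_le_of_nonneg (hm q) (by positivity)

lemma lipschitzLowerEnvelope_le (hm : ∀ q, m ≤ F q) (k : ℝ≥0) (p : X) :
    lipschitzLowerEnvelope F k p ≤ F p := by
  simpa [lipschitzLowerEnvelope] using ciInf_le (bddBelow_range_add_mul_dist hm k p) p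

lemma lipschitzLowerEnvelope_mono (hm : ∀ q, m ≤ F q) {k k' : ℝ≥0} (hk : k ≤ k') (p : X) :
    lipschitzLowerEnvelope F k p ≤ lipschitzLowerEnvelope F k' p :=
  ciInf_mono (bddBelow_range_add_mul_dist hm k p) fun q => by gcongr

lemma lipschitzWith_lipschitzLowerEnvelope (hm : ∀ q, m ≤ F q) (k : ℝ≥0) :
    LipschitzWith k (lipschitzLowerEnvelope F k) := by
  refine LipschitzWith.of_le_add_mul k fun p p' => ?_
  have : Nonempty X := ⟨p⟩
  rw [← sub_le_iff_le_add]
  refine le_ciInf fun q => sub_le_iff_le_add.2 ?_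
  calc lipschitzLowerEnvelope F k p ≤ F q + k * dist p q :=
        ciInf_le (bddBelow_range_add_mul_dist hm k p) q
    _ ≤ F q + k * (dist p' q + dist p p') := by
        gcongr; linarith [dist_triangle p p' q, dist_comm p p']
    _ = F q + k * dist p' q + k * dist p p' := by ring

theorem tendsto_lipschitzLowerEnvelope (hm : ∀ q, m ≤ F q) {x : X} (hF : ContinuousAt F x)
    {ι : Type*} {l : Filter ι} {k : ι → ℝ≥0} (hk : Tendsto k l atTop) {p : ι → X}
    (hp : Tendsto p l (𝓝 x)) :
    Tendsto (fun i => lipschitzLowerEnvelope F (k i) (p i)) l (𝓝 (F x)) := by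
  refine tendsto_order.2 ⟨fun c hc => ?_, fun c hc => ?_⟩
  · obtain ⟨c', hcc', hc'⟩ := exists_between hc
    obtain ⟨δ, hδ, hδF⟩ := Metric.eventually_nhds_iff.1 (hF.eventually (lt_mem_nhds hc'))
    have hk' : ∀ᶠ i in l, (c' - m) / (δ / 2) ≤ k i :=
      (tendsto_coe_atTop.2 hk).eventually (eventually_ge_atTop _)
    filter_upwards [hk', hp.eventually (Metric.ball_mem_nhds x (half_pos hδ))] with i hki hpi
    have : Nonempty X := ⟨x⟩
    refine hcc'.trans_le (le_ciInf fun q => ?_)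
    by_cases hq : dist q x < δ
    · exact le_add_of_le_of_nonneg (hδF hq).le (by positivity)
    · have hpi' : dist (p i) x < δ / 2 := hpi
      have hfar : δ / 2 ≤ dist (p i) q := by
        linarith [dist_triangle q (p i) x, dist_comm q (p i)]
      rw [div_le_iff₀ (half_pos hδ)] at hki
      nlinarith [hm q, (k i).2]
  · filter_upwards [(hF.tendsto.comp hp).eventually (gt_mem_nhds hc)] with i hi
    exact (lipschitzLowerEnvelope_le hm (k i) (p i)).trans_lt hi

end LipschitzLowerEnvelope

theorem le_of_hasDerivWithinAt_Icc_of_sub_le_mul {φ ψ φ' ψ' : ℝ → ℝ} {a b K : ℝ}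
    (hφ : ∀ x ∈ Icc a b, HasDerivWithinAt φ (φ' x) (Icc a b) x)
    (hψ : ∀ x ∈ Icc a b, HasDerivWithinAt ψ (ψ' x) (Icc a b) x) (ha : φ a ≤ ψ a)
    (bound : ∀ x ∈ Ico a b, ψ x < φ x → φ' x - ψ' x ≤ K * (φ x - ψ x)) :
    ∀ x ∈ Icc a b, φ x ≤ ψ x := by
  have hd : ∀ x ∈ Ico a b, HasDerivWithinAt (fun x => φ x - ψ x) (φ' x - ψ' x) (Ici x) x :=
    fun x hx => ((hφ x (Ico_subset_Icc_self hx)).sub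
      (hψ x (Ico_subset_Icc_self hx))).mono_of_mem_nhdsWithin (Icc_mem_nhdsGE_of_mem hx)
  have hc : ContinuousOn (fun x => φ x - ψ x) (Icc a b) := fun x hx =>
    ((hφ x hx).sub (hψ x hx)).continuousWithinAt
  -- compare `φ - ψ` with the strict barrier `ε * exp ((|K| + 1) * (x - a))` and let `ε → 0`
  have hbarrier : ∀ ε > (0 : ℝ), ∀ x ∈ Icc a b,
      φ x - ψ x ≤ ε * Real.exp ((|K| + 1) * (x - a)) := by
    intro ε hε
    refine image_le_of_deriv_right_lt_deriv_boundary hc hd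
      (by simpa using ha.trans (le_add_of_nonneg_left hε.le))
      (fun x => (((hasDerivAt_id x).sub_const a).const_mul (|K| + 1)).exp.const_mul ε) ?_
    intro x hx hx_eq
    have hB : 0 < ε * Real.exp ((|K| + 1) * (x - a)) := by positivity
    have hder := bound x hx (sub_pos.1 (hx_eq ▸ hB))
    rw [hx_eq] at hder
    simp only [id, mul_one]
    nlinarith [mul_le_mul_of_nonneg_right (le_abs_self K) hB.le]
  intro x hx
  have hE := Real.exp_pos ((|K| + 1) * (x - a))
  refine sub_nonpos.1 (le_of_forall_pos_le_add fun δ hδ => ?_)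
  simpa [div_mul_cancel₀ δ hE.ne'] using
    hbarrier (δ / Real.exp ((|K| + 1) * (x - a))) (by positivity) x hx

theorem exists_eq_forall_mem_Icc_hasDerivWithinAt_of_lipschitzWith {w : ℝ × ℝ → ℝ} {K M : ℝ≥0}
    (hw : ∀ t, LipschitzWith K fun y => w (t, y)) (hwc : Continuous w) (hM : ∀ p, |w p| ≤ M)
    {a b : ℝ} (hab : a ≤ b) (y₀ : ℝ) :
    ∃ φ : ℝ → ℝ, φ a = y₀ ∧ ∀ t ∈ Icc a b, HasDerivWithinAt φ (w (t, φ t)) (Icc a b) t := by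
  have hPL : IsPicardLindelof (fun t y => w (t, y)) (tmin := a) (tmax := b)
      ⟨a, left_mem_Icc.2 hab⟩ y₀ (M * (b - a).toNNReal) 0 M K :=
    { lipschitzOnWith := fun t _ => (hw t).lipschitzOnWith
      continuousOn := fun y _ => (hwc.comp (continuous_id.prodMk continuous_const)).continuousOn
      norm_le := fun t _ y _ => hM (t, y)
      mul_max_le := by
        simp [max_eq_left (sub_nonneg.2 hab), Real.coe_toNNReal _ (sub_nonneg.2 hab)] }
  exact hPL.exists_eq_forall_mem_Icc_hasDerivWithinAt₀

theorem le_of_hasDerivWithinAt_of_le_of_lipschitzWith {v w : ℝ × ℝ → ℝ} {K : ℝ≥0}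
    (hw : ∀ t, LipschitzWith K fun y => w (t, y)) (hvw : ∀ p, v p ≤ w p) {φ ψ : ℝ → ℝ} {a b : ℝ}
    (hφ : ∀ t ∈ Icc a b, HasDerivWithinAt φ (v (t, φ t)) (Icc a b) t)
    (hψ : ∀ t ∈ Icc a b, HasDerivWithinAt ψ (w (t, ψ t)) (Icc a b) t) (ha : φ a ≤ ψ a) :
    ∀ t ∈ Icc a b, φ t ≤ ψ t :=
  le_of_hasDerivWithinAt_Icc_of_sub_le_mul (K := K) hφ hψ ha fun t _ hlt => by
    have hlip := (hw t).dist_le_mul (φ t) (ψ t)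
    rw [Real.dist_eq, Real.dist_eq, abs_of_pos (sub_pos.2 hlt)] at hlip
    linarith [hvw (t, φ t), le_abs_self (w (t, φ t) - w (t, ψ t))]

theorem hasDerivWithinAt_of_tendsto_of_hasDerivWithinAt {F : ℝ × ℝ → ℝ} (hF : Continuous F)
    {w : ℕ → ℝ × ℝ → ℝ} (hw : ∀ n, Continuous (w n)) {M : ℝ≥0} (hM : ∀ n p, |w n p| ≤ M)
    {Φ : ℕ → ℝ → ℝ} {φ : ℝ → ℝ} {a b : ℝ}
    (hΦ : ∀ n, ∀ t ∈ Icc a b, HasDerivWithinAt (Φ n) (w n (t, Φ n t)) (Icc a b) t)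
    (hΦφ : ∀ t ∈ Icc a b, Tendsto (fun n => Φ n t) atTop (𝓝 (φ t)))
    (hwF : ∀ t ∈ Icc a b, Tendsto (fun n => w n (t, Φ n t)) atTop (𝓝 (F (t, φ t)))) :
    ∀ t ∈ Icc a b, HasDerivWithinAt φ (F (t, φ t)) (Icc a b) t := by
  have hΦlip n : LipschitzOnWith M (Φ n) (Icc a b) :=
    (convex_Icc a b).lipschitzOnWith_of_nnnorm_hasDerivWithin_le (hΦ n) fun t _ => by
      rw [← NNReal.coe_le_coe, coe_nnnorm]; exact hM n _
  have hφc : ContinuousOn φ (Icc a b) :=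
    (LipschitzOnWith.of_dist_le_mul fun s hs t ht =>
      le_of_tendsto_of_tendsto' ((hΦφ s hs).dist (hΦφ t ht)) tendsto_const_nhds
        fun n => (hΦlip n).dist_le_mul s hs t ht).continuousOn
  -- each `Φ n`, and in the limit `φ`, solves the integral form of its equation
  have hφint : ∀ t ∈ Icc a b, ODE.picard (fun s y => F (s, y)) a (φ a) φ t = φ t := by
    intro t ht
    have hsub : uIcc a t ⊆ Icc a b := by
      rw [uIcc_of_le ht.1]; exact Icc_subset_Icc_right ht.2
    have hΦint n : ODE.picard (fun s y => w n (s, y)) a (Φ n a) (Φ n) t = Φ n t :=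
      ODE.picard_eq_of_hasDerivAt (u := univ) (hw n).continuousOn
        (fun s hs => (hΦ n s (hsub hs)).mono hsub) (mapsTo_univ _ _)
    refine tendsto_nhds_unique ?_ (hΦφ t ht)
    simp only [← hΦint, ODE.picard_apply]
    refine (hΦφ a (left_mem_Icc.2 (ht.1.trans ht.2))).add
      (intervalIntegral.tendsto_integral_filter_of_dominated_convergence (fun _ => M) ?_ ?_
        intervalIntegrable_const ?_)
    · refine Eventually.of_forall fun n => ContinuousOn.aestronglyMeasurable ?_ measurableSet_uIoc
      exact ((hw n).comp_continuousOn (continuousOn_id.prodMk fun s hs =>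
        (hΦ n s hs).continuousWithinAt)).mono (uIoc_subset_uIcc.trans hsub)
    · exact Eventually.of_forall fun n => MeasureTheory.ae_of_all _ fun s _ => hM n _
    · exact MeasureTheory.ae_of_all _ fun s hs => hwF s (hsub (uIoc_subset_uIcc hs))
  intro t ht
  exact (ODE.hasDerivWithinAt_picard_Icc (f := fun s y => F (s, y)) (u := univ)
    (left_mem_Icc.2 (ht.1.trans ht.2)) hF.continuousOn hφc (fun _ _ => mem_univ _) (φ a)
    ht).congr_of_mem (fun s hs => (hφint s hs).symm) ht

theorem exists_eq_forall_mem_Icc_hasDerivWithinAt_of_continuous {F : ℝ × ℝ → ℝ}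
    (hF : Continuous F) {M : ℝ≥0} (hM : ∀ p, |F p| ≤ M) {a b : ℝ} (hab : a ≤ b) (y₀ : ℝ) :
    ∃ φ : ℝ → ℝ, φ a = y₀ ∧ ∀ t ∈ Icc a b, HasDerivWithinAt φ (F (t, φ t)) (Icc a b) t := by
  have hm p : -(M : ℝ) ≤ F p := neg_le_of_abs_le (hM p)
  set w : ℕ → ℝ × ℝ → ℝ := fun n => lipschitzLowerEnvelope F n
  have hwlip (n : ℕ) : LipschitzWith n (w n) := lipschitzWith_lipschitzLowerEnvelope hm n
  have hwy (n : ℕ) (t : ℝ) : LipschitzWith n fun y => w n (t, y) := by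
    simpa [Function.comp_def] using (hwlip n).comp (LipschitzWith.prodMk_left t)
  have hwM (n : ℕ) (p : ℝ × ℝ) : |w n p| ≤ M := abs_le.2 ⟨le_lipschitzLowerEnvelope hm n p,
    (lipschitzLowerEnvelope_le hm n p).trans (le_of_abs_le (hM p))⟩
  choose Φ hΦa hΦ using fun n => exists_eq_forall_mem_Icc_hasDerivWithinAt_of_lipschitzWith
    (hwy n) (hwlip n).continuous (hwM n) hab y₀
  -- the approximating fields increase with `n`, hence so do their solutions
  have hmono : ∀ t ∈ Icc a b, Monotone fun n => Φ n t := fun t ht =>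
    monotone_nat_of_le_succ fun n => le_of_hasDerivWithinAt_of_le_of_lipschitzWith (hwy (n + 1))
      (lipschitzLowerEnvelope_mono hm (by simp)) (hΦ n) (hΦ (n + 1)) (by rw [hΦa, hΦa]) t ht
  have hbdd : ∀ t ∈ Icc a b, BddAbove (range fun n => Φ n t) := by
    refine fun t ht => ⟨y₀ + M * ‖t - a‖, ?_⟩
    rintro _ ⟨n, rfl⟩
    have := (convex_Icc a b).norm_image_sub_le_of_norm_hasDerivWithin_le (hΦ n)
      (fun s _ => hwM n _) (left_mem_Icc.2 hab) ht
    rw [Real.norm_eq_abs, hΦa] at this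
    exact show Φ n t ≤ y₀ + M * ‖t - a‖ by linarith [le_abs_self (Φ n t - y₀)]
  have hlim : ∀ t ∈ Icc a b, Tendsto (fun n => Φ n t) atTop (𝓝 (⨆ n, Φ n t)) := fun t ht =>
    tendsto_atTop_ciSup (hmono t ht) (hbdd t ht)
  refine ⟨fun t => ⨆ n, Φ n t, by simp [hΦa], hasDerivWithinAt_of_tendsto_of_hasDerivWithinAt hF
    (fun n => (hwlip n).continuous) hwM hΦ hlim fun t ht => ?_⟩
  exact tendsto_lipschitzLowerEnvelope hm hF.continuousAt tendsto_natCast_atTop_atTop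
    (tendsto_const_nhds.prodMk_nhds (hlim t ht))

def closedRegionBetween {α : Type*} (f g : α → ℝ) (s : Set α) : Set (α × ℝ) :=
  {p : α × ℝ | p.1 ∈ s ∧ p.2 ∈ Icc (f p.1) (g p.1)}

section ClampToRegion

variable {l u : ℝ → ℝ} {a b : ℝ} (hab : a ≤ b)

noncomputable def clampToRegion (l u : ℝ → ℝ) (p : ℝ × ℝ) : ℝ × ℝ :=
  ((projIcc a b hab p.1 : ℝ),
    max (l (projIcc a b hab p.1)) (min p.2 (u (projIcc a b hab p.1))))

lemma clampToRegion_of_mem_Icc {x : ℝ} (hx : x ∈ Icc a b) (y : ℝ) :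
    clampToRegion hab l u (x, y) = (x, max (l x) (min y (u x))) := by
  simp [clampToRegion, projIcc_of_mem hab hx]

lemma clampToRegion_mem (hlu : ∀ x ∈ Icc a b, l x ≤ u x) (p : ℝ × ℝ) :
    clampToRegion hab l u p ∈ closedRegionBetween l u (Icc a b) := by
  have hx := (projIcc a b hab p.1).2
  exact ⟨hx, le_max_left _ _, max_le (hlu _ hx) (min_le_right _ _)⟩

lemma clampToRegion_of_mem {p : ℝ × ℝ} (hp : p ∈ closedRegionBetween l u (Icc a b)) :
    clampToRegion hab l u p = p := by
  rw [clampToRegion_of_mem_Icc hab hp.1, min_eq_left hp.2.2, max_eq_right hp.2.1]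

lemma continuous_clampToRegion (hl : ContinuousOn l (Icc a b)) (hu : ContinuousOn u (Icc a b)) :
    Continuous (clampToRegion hab l u) := by
  have hx : Continuous fun p : ℝ × ℝ => (projIcc a b hab p.1 : ℝ) :=
    continuous_subtype_val.comp (continuous_projIcc.comp continuous_fst)
  have hmem p : (projIcc a b hab (p : ℝ × ℝ).1 : ℝ) ∈ Icc a b := (projIcc a b hab p.1).2
  exact hx.prodMk ((hl.comp_continuous hx hmem).max
    (continuous_snd.min (hu.comp_continuous hx hmem)))

end ClampToRegion

lemma isCompact_closedRegionBetween {l u : ℝ → ℝ} {a b : ℝ} (hl : ContinuousOn l (Icc a b))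
    (hu : ContinuousOn u (Icc a b)) (hlu : ∀ x ∈ Icc a b, l x ≤ u x) :
    IsCompact (closedRegionBetween l u (Icc a b)) := by
  rcases lt_or_ge b a with hba | hab
  · simp [closedRegionBetween, Icc_eq_empty_of_lt hba]
  obtain ⟨Cl, hCl⟩ := isCompact_Icc.exists_bound_of_continuousOn hl
  obtain ⟨Cu, hCu⟩ := isCompact_Icc.exists_bound_of_continuousOn hu
  have hfix : closedRegionBetween l u (Icc a b) = {p | clampToRegion hab l u p = p} :=
    ext fun p => ⟨clampToRegion_of_mem hab, fun hp => by
      rw [← hp]; exact clampToRegion_mem hab hlu p⟩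
  have hclosed : IsClosed (closedRegionBetween l u (Icc a b)) :=
    hfix ▸ isClosed_eq (continuous_clampToRegion hab hl hu) continuous_id
  refine ((isCompact_Icc (a := a) (b := b)).prod
    (isCompact_Icc (a := -Cl) (b := Cu))).of_isClosed_subset hclosed ?_
  rintro ⟨x, y⟩ ⟨hx, hy⟩
  exact ⟨hx, (neg_le_of_abs_le (hCl x hx)).trans hy.1, hy.2.trans (le_of_abs_le (hCu x hx))⟩

theorem exists_hasDerivWithinAt_mem_closedRegionBetween {f : ℝ × ℝ → ℝ} {l u l' u' : ℝ → ℝ}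
    {a b y₀ : ℝ} (hab : a ≤ b)
    (hl : ∀ x ∈ Icc a b, HasDerivWithinAt l (l' x) (Icc a b) x)
    (hu : ∀ x ∈ Icc a b, HasDerivWithinAt u (u' x) (Icc a b) x)
    (hlu : ∀ x ∈ Icc a b, l x ≤ u x) (hf : ContinuousOn f (closedRegionBetween l u (Icc a b)))
    (hfl : ∀ x ∈ Ico a b, l' x ≤ f (x, l x)) (hfu : ∀ x ∈ Ico a b, f (x, u x) ≤ u' x)
    (hy₀ : y₀ ∈ Icc (l a) (u a)) :
    ∃ φ : ℝ → ℝ, φ a = y₀ ∧ ∀ x ∈ Icc a b, (x, φ x) ∈ closedRegionBetween l u (Icc a b) ∧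
      HasDerivWithinAt φ (f (x, φ x)) (Icc a b) x := by
  have hlc : ContinuousOn l (Icc a b) := fun x hx => (hl x hx).continuousWithinAt
  have huc : ContinuousOn u (Icc a b) := fun x hx => (hu x hx).continuousWithinAt
  have hr := clampToRegion_mem hab hlu
  obtain ⟨C, hC⟩ :=
    (isCompact_closedRegionBetween hlc huc hlu).exists_bound_of_continuousOn hf
  obtain ⟨φ, hφa, hφ⟩ := exists_eq_forall_mem_Icc_hasDerivWithinAt_of_continuous
    (hf.comp_continuous (continuous_clampToRegion hab hlc huc) hr) (M := C.toNNReal)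
    (fun p => (hC _ (hr p)).trans (Real.le_coe_toNNReal C)) hab y₀
  -- beyond a graph the clamped field is the value of `f` on that graph, which points inward
  have hφu : ∀ x ∈ Icc a b, φ x ≤ u x :=
    le_of_hasDerivWithinAt_Icc_of_sub_le_mul (K := 0) hφ hu (hφa ▸ hy₀.2) fun x hx hlt => by
      have hx' := Ico_subset_Icc_self hx
      simp only [Function.comp_apply, clampToRegion_of_mem_Icc hab hx', min_eq_right hlt.le,
        max_eq_right (hlu x hx'), zero_mul]
      linarith [hfu x hx]
  have hφl : ∀ x ∈ Icc a b, l x ≤ φ x :=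
    le_of_hasDerivWithinAt_Icc_of_sub_le_mul (K := 0) hl hφ (hφa ▸ hy₀.1) fun x hx hlt => by
      have hx' := Ico_subset_Icc_self hx
      simp only [Function.comp_apply, clampToRegion_of_mem_Icc hab hx',
        min_eq_left (hlt.le.trans (hlu x hx')), max_eq_left hlt.le, zero_mul]
      linarith [hfl x hx]
  have hmem : ∀ x ∈ Icc a b, (x, φ x) ∈ closedRegionBetween l u (Icc a b) := fun x hx =>
    ⟨hx, hφl x hx, hφu x hx⟩
  refine ⟨φ, hφa, fun x hx => ⟨hmem x hx, ?_⟩⟩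
  simpa only [Function.comp_apply, clampToRegion_of_mem hab (hmem x hx)] using hφ x hx

lemma ConvexOn.le_of_hasDerivWithinAt_eq_zero {S : Set ℝ} {f : ℝ → ℝ} {x y : ℝ}
    (hfc : ConvexOn ℝ S f) (hx : x ∈ S) (hy : y ∈ S) (hxy : x ≤ y)
    (hf : HasDerivWithinAt f 0 S x) : f x ≤ f y := by
  rcases hxy.eq_or_lt with rfl | hxy
  · exact le_rfl
  have hslope := hfc.le_slope_of_hasDerivWithinAt hx hy hxy hf
  rw [slope_def_field, le_div_iff₀ (sub_pos.2 hxy), zero_mul] at hslope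
  linarith

lemma exists_mem_Ioc_forall_mem_Icc_lt {g : ℝ → ℝ} {a c r : ℝ} (hac : a < c)
    (hg : ContinuousWithinAt g (Icc a c) a) (hr : r < g a) :
    ∃ h ∈ Ioc a c, ∀ x ∈ Icc a h, r < g x := by
  have hev : ∀ᶠ x in 𝓝[≥] a, r < g x := by
    rw [← nhdsWithin_Icc_eq_nhdsGE hac]
    exact hg.eventually (lt_mem_nhds hr)
  obtain ⟨h, hh, hsub⟩ := mem_nhdsGE_iff_exists_Icc_subset.1 hev
  exact ⟨min c h, ⟨lt_min hac hh, min_le_left _ _⟩,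
    fun x hx => hsub ⟨hx.1, hx.2.trans (min_le_right _ _)⟩⟩

lemma closedRegionBetween_Icc_subset_union {G Γ : Set (ℝ × ℝ)} {l u : ℝ → ℝ} {c : ℝ}
    (hl0 : l 0 = 0) (hu0 : u 0 = 0) (hO : ((0 : ℝ), (0 : ℝ)) ∈ Γ)
    (hlΓ : ∀ x ∈ Ioc 0 c, (x, l x) ∈ Γ) (huΓ : ∀ x ∈ Ioc 0 c, (x, u x) ∈ Γ)
    (hin : ∀ x y : ℝ, 0 < x → x ≤ c → l x < y → y < u x → (x, y) ∈ G) :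
    closedRegionBetween l u (Icc 0 c) ⊆ G ∪ Γ := by
  rintro ⟨x, y⟩ hxy
  obtain ⟨⟨hx₀, hxc⟩, hyl, hyu⟩ : (0 ≤ x ∧ x ≤ c) ∧ l x ≤ y ∧ y ≤ u x := hxy
  rcases hx₀.eq_or_lt with rfl | hx₀
  · obtain rfl : y = 0 := le_antisymm (hu0 ▸ hyu) (hl0 ▸ hyl)
    exact Or.inr hO
  rcases hyl.eq_or_lt with rfl | hyl
  · exact Or.inr (hlΓ x ⟨hx₀, hxc⟩)
  rcases hyu.eq_or_lt with rfl | hyu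
  · exact Or.inr (huΓ x ⟨hx₀, hxc⟩)
  exact Or.inl (hin x y hx₀ hxc hyl hyu)

theorem theorem1_case_B1_eq_lt_general
    (G Ghat : Set (ℝ × ℝ))
    (f₀ : ℝ × ℝ → ℝ) (hf : ContinuousOn f₀ (G ∪ Ghat))
    (hO : ((0 : ℝ), (0 : ℝ)) ∈ Ghat) (hf0 : f₀ (0, 0) = 0)
    (a τ : ℝ) (hτ : 0 < τ)
    (bu bu' bl bl' : ℝ → ℝ)
    (hderivu : ∀ x ∈ Icc (0 : ℝ) a, HasDerivWithinAt bu (bu' x) (Icc (0 : ℝ) a) x)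
    (hderivl : ∀ x ∈ Icc (0 : ℝ) a, HasDerivWithinAt bl (bl' x) (Icc (0 : ℝ) a) x)
    (hbu0 : bu 0 = 0) (hbl0 : bl 0 = 0)
    (hbu'0 : bu' 0 = 0)
    (hconv : ConvexOn ℝ (Icc (0 : ℝ) a) bu)
    (hbl'τ : ∀ x ∈ Icc (0 : ℝ) a, bl' x ≤ -τ)
    (hcurveu : ∀ x ∈ Ioc (0 : ℝ) a, (x, bu x) ∈ Ghat)
    (hcurvel : ∀ x ∈ Ioc (0 : ℝ) a, (x, bl x) ∈ Ghat)
    (hbcu : ∀ x ∈ Ioc (0 : ℝ) a, f₀ (x, bu x) ≤ bu' x)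
    (c : ℝ) (hc : c ∈ Ioc (0 : ℝ) a)
    (hin : ∀ x y : ℝ, 0 < x → x ≤ c → bl x < y → y < bu x → (x, y) ∈ G) :
    ∃ h ∈ Ioc (0 : ℝ) c, ∃ φ : ℝ → ℝ, φ 0 = 0 ∧
      ∀ x ∈ Icc (0 : ℝ) h, (x, φ x) ∈ G ∪ Ghat ∧
        HasDerivWithinAt φ (f₀ (x, φ x)) (Icc (0 : ℝ) h) x := by
  obtain ⟨hc₀, hca⟩ := hc
  have hca' : Icc 0 c ⊆ Icc 0 a := Icc_subset_Icc_right hca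
  have hbl_nonpos : ∀ x ∈ Icc 0 a, bl x ≤ 0 :=
    le_of_hasDerivWithinAt_Icc_of_sub_le_mul (K := 0) hderivl
      (fun x _ => hasDerivWithinAt_const x _ 0) hbl0.le fun x hx _ => by
        linarith [hbl'τ x (Ico_subset_Icc_self hx)]
  have hbu_nonneg : ∀ x ∈ Icc 0 a, 0 ≤ bu x := fun x hx => by
    have h0a : (0 : ℝ) ∈ Icc 0 a := left_mem_Icc.2 (hx.1.trans hx.2)
    simpa [hbu0] using hconv.le_of_hasDerivWithinAt_eq_zero h0a hx hx.1
      (by simpa [hbu'0] using hderivu 0 h0a)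
  have hregion : closedRegionBetween bl bu (Icc 0 c) ⊆ G ∪ Ghat :=
    closedRegionBetween_Icc_subset_union hbl0 hbu0 hO (fun x hx => hcurvel x ⟨hx.1, hx.2.trans hca⟩)
      (fun x hx => hcurveu x ⟨hx.1, hx.2.trans hca⟩) hin
  -- near the origin `f₀` exceeds `-τ ≥ bl'` along the lower graph, since `f₀ (0, 0) = 0`
  obtain ⟨h, ⟨hh₀, hhc⟩, hτh⟩ := exists_mem_Ioc_forall_mem_Icc_lt (r := -τ) hc₀
    (hf.comp (continuousOn_id.prodMk fun x hx => (hderivl x (hca' hx)).continuousWithinAt.mono hca')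
      (fun x hx => hregion ⟨hx, le_rfl, (hbl_nonpos x (hca' hx)).trans (hbu_nonneg x (hca' hx))⟩)
      0 (left_mem_Icc.2 hc₀.le))
    (by simp [hbl0, hf0, hτ])
  have hhc' : Icc 0 h ⊆ Icc 0 c := Icc_subset_Icc_right hhc
  have hha := hhc'.trans hca'
  have hregion' : closedRegionBetween bl bu (Icc 0 h) ⊆ G ∪ Ghat :=
    fun p hp => hregion ⟨hhc' hp.1, hp.2⟩
  obtain ⟨φ, hφ0, hφ⟩ := exists_hasDerivWithinAt_mem_closedRegionBetween (y₀ := 0) hh₀.le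
    (fun x hx => (hderivl x (hha hx)).mono hha) (fun x hx => (hderivu x (hha hx)).mono hha)
    (fun x hx => (hbl_nonpos x (hha hx)).trans (hbu_nonneg x (hha hx))) (hf.mono hregion')
    (fun x hx => (hbl'τ x (hha (Ico_subset_Icc_self hx))).trans (hτh x (Ico_subset_Icc_self hx)).le)
    (fun x hx => by
      rcases hx.1.eq_or_lt with rfl | hx₀
      · simp [hbu0, hf0, hbu'0]
      · exact hbcu x ⟨hx₀, (hha (Ico_subset_Icc_self hx)).2⟩)
    (by simp [hbl0, hbu0])
  exact ⟨h, ⟨hh₀, hhc⟩, φ, hφ0, fun x hx => ⟨hregion' (hφ x hx).1, (hφ x hx).2⟩⟩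

/-- Theorem 1, case B⁺₁,₌,<. -/
theorem theorem1_case_B1_eq_lt
    (G Ghat : Set (ℝ × ℝ)) (hGopen : IsOpen G) (hGhat : Ghat ⊆ frontier G)
    (f₀ : ℝ × ℝ → ℝ) (hf : ContinuousOn f₀ (G ∪ Ghat))
    (hO : ((0 : ℝ), (0 : ℝ)) ∈ Ghat) (hf0 : f₀ (0, 0) = 0)
    (a τ : ℝ) (ha : 0 < a) (hτ : 0 < τ)
    (bu bu' bl bl' : ℝ → ℝ)
    (hderivu : ∀ x ∈ Icc (0 : ℝ) a, HasDerivWithinAt bu (bu' x) (Icc (0 : ℝ) a) x)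
    (hbu'cont : ContinuousOn bu' (Icc (0 : ℝ) a))
    (hderivl : ∀ x ∈ Icc (0 : ℝ) a, HasDerivWithinAt bl (bl' x) (Icc (0 : ℝ) a) x)
    (hbl'cont : ContinuousOn bl' (Icc (0 : ℝ) a))
    (hbu0 : bu 0 = 0) (hbl0 : bl 0 = 0)
    (hbu'0 : bu' 0 = 0)
    (hconv : ConvexOn ℝ (Icc (0 : ℝ) a) bu)
    (hbl'τ : ∀ x ∈ Icc (0 : ℝ) a, bl' x ≤ -τ)
    (hcurveu : ∀ x ∈ Ioc (0 : ℝ) a, (x, bu x) ∈ Ghat)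
    (hcurvel : ∀ x ∈ Ioc (0 : ℝ) a, (x, bl x) ∈ Ghat)
    (hbcu : ∀ x ∈ Ioc (0 : ℝ) a, f₀ (x, bu x) ≤ bu' x)
    (c : ℝ) (hc : c ∈ Ioc (0 : ℝ) a)
    (hin : ∀ x y : ℝ, 0 < x → x ≤ c → bl x < y → y < bu x → (x, y) ∈ G) :
    ∃ h ∈ Ioc (0 : ℝ) c, ∃ φ : ℝ → ℝ, φ 0 = 0 ∧
      ∀ x ∈ Icc (0 : ℝ) h, (x, φ x) ∈ G ∪ Ghat ∧
        HasDerivWithinAt φ (f₀ (x, φ x)) (Icc (0 : ℝ) h) x :=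
  theorem1_case_B1_eq_lt_general G Ghat f₀ hf hO hf0 a τ hτ bu bu' bl bl' hderivu hderivl hbu0 hbl0
    hbu'0 hconv hbl'τ hcurveu hcurvel hbcu c hc hin
end

section
/- Theorem 2, case N⁺₂: Assume there exists c > 0 such that no point (x,y) with 0 < x ≤ c and |y| ≤ c belongs to G. Then for every d > 0 there is no function φ : [0,d] → ℝ with φ(0) = 0 which is a solution of y' = f₀(x,y) with graph in G̃ on [0,d]. -/
open Set Topology Filter

/-- Theorem 2, case N⁺₂. -/
theorem theorem2_case_N2
    (G Ghat : Set (ℝ × ℝ)) (hGopen : IsOpen G) (hGhat : Ghat ⊆ frontier G)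
    (f₀ : ℝ × ℝ → ℝ) (hf : ContinuousOn f₀ (G ∪ Ghat))
    (hO : ((0 : ℝ), (0 : ℝ)) ∈ Ghat) (hf0 : f₀ (0, 0) = 0)
    (c : ℝ) (hc : 0 < c)
    (hempty : ∀ x y : ℝ, 0 < x → x ≤ c → |y| ≤ c → (x, y) ∉ G) :
    ∀ d : ℝ, 0 < d →
      ¬ ∃ φ : ℝ → ℝ, φ 0 = 0 ∧
        ∀ x ∈ Icc (0 : ℝ) d, (x, φ x) ∈ G ∪ Ghat ∧
          HasDerivWithinAt φ (f₀ (x, φ x)) (Icc (0 : ℝ) d) x := by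
  intro d hd
  rintro ⟨φ, hφ0, hφ⟩
  have hmem0 : (0:ℝ) ∈ Icc (0:ℝ) d := ⟨le_refl _, hd.le⟩
  have hcont : ContinuousWithinAt φ (Icc 0 d) 0 :=
    (hφ 0 hmem0).2.continuousWithinAt
  set d' := min (c/2) d with hd'def
  have hd'pos : 0 < d' := lt_min (by linarith) hd
  have hd'c : d' < c := lt_of_le_of_lt (min_le_left _ _) (by linarith)
  have hsub : Ioc (0:ℝ) d' ⊆ Icc 0 d := fun x hx =>
    ⟨hx.1.le, hx.2.trans (min_le_right _ _)⟩
  have hne : (𝓝[Ioc (0:ℝ) d'] 0).NeBot := by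
    rw [← mem_closure_iff_nhdsWithin_neBot, closure_Ioc hd'pos.ne]
    exact ⟨le_refl _, hd'pos.le⟩
  have h1 : ∀ᶠ x in 𝓝[Icc (0:ℝ) d] 0, |φ x| < c := by
    have ht := hcont.tendsto
    rw [hφ0] at ht
    have hb : Metric.ball (0:ℝ) c ∈ 𝓝 (0:ℝ) := Metric.ball_mem_nhds _ hc
    filter_upwards [ht hb] with x hx
    simpa [Real.dist_eq] using hx
  have h1' : ∀ᶠ x in 𝓝[Ioc (0:ℝ) d'] 0, |φ x| < c :=
    h1.filter_mono (nhdsWithin_mono _ hsub)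
  have h2 : ∀ᶠ x in 𝓝[Ioc (0:ℝ) d'] 0, x ∈ Ioc (0:ℝ) d' := self_mem_nhdsWithin
  obtain ⟨x, hxabs, hx⟩ := (h1'.and h2).exists
  -- The open rectangle U is disjoint from G, hence from closure G
  set U : Set (ℝ × ℝ) := Ioo (0:ℝ) c ×ˢ Ioo (-c) c with hU
  have hUdisj : G ⊆ Uᶜ := by
    intro p hp hpU
    exact hempty p.1 p.2 hpU.1.1 hpU.1.2.le (abs_le.mpr ⟨hpU.2.1.le, hpU.2.2.le⟩) hp
  have hclos : closure G ⊆ Uᶜ :=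
    closure_minimal hUdisj (isClosed_compl_iff.mpr ((isOpen_Ioo).prod (isOpen_Ioo)))
  have hmem : (x, φ x) ∈ G ∪ Ghat := (hφ x (hsub hx)).1
  have hmemcl : (x, φ x) ∈ closure G := by
    rcases hmem with h | h
    · exact subset_closure h
    · exact (frontier_subset_closure) (hGhat h)
  have hinU : (x, φ x) ∈ U := by
    refine ⟨⟨hx.1, lt_of_le_of_lt hx.2 hd'c⟩, ?_⟩
    rcases abs_lt.mp hxabs with ⟨h1, h2⟩
    exact ⟨h1, h2⟩
  exact hclos hmemcl hinU
end

section
/- Theorem 2, case U⁺₂,>: Assume there exist a > 0, τ > 0 and a continuously differentiable function b : [0,a] → ℝ with b(0) = 0 and b'(x) ≥ τ for all x ∈ [0,a], and there exists c ∈ (0,a] such that every point (x,y) ∈ G̃ with 0 < x ≤ c and −c ≤ y ≤ b(x) lies on the curve, i.e. satisfies y = b(x). Then for every d > 0 there is no function φ : [0,d] → ℝ with φ(0) = 0 which is a solution of y' = f₀(x,y) with graph in G̃ on [0,d]. -/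
open Set

/-- Theorem 2, case U⁺₂,>. -/
theorem theorem2_case_U2_gt
    (G Ghat : Set (ℝ × ℝ)) (hGopen : IsOpen G) (hGhat : Ghat ⊆ frontier G)
    (f₀ : ℝ × ℝ → ℝ) (hf : ContinuousOn f₀ (G ∪ Ghat))
    (hO : ((0 : ℝ), (0 : ℝ)) ∈ Ghat) (hf0 : f₀ (0, 0) = 0)
    (a τ : ℝ) (ha : 0 < a) (hτ : 0 < τ)
    (b b' : ℝ → ℝ)
    (hderiv : ∀ x ∈ Icc (0 : ℝ) a, HasDerivWithinAt b (b' x) (Icc (0 : ℝ) a) x)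
    (hb'cont : ContinuousOn b' (Icc (0 : ℝ) a))
    (hb0 : b 0 = 0)
    (hb'τ : ∀ x ∈ Icc (0 : ℝ) a, τ ≤ b' x)
    (c : ℝ) (hc : c ∈ Ioc (0 : ℝ) a)
    (honly : ∀ x y : ℝ, (x, y) ∈ G ∪ Ghat → 0 < x → x ≤ c → -c ≤ y → y ≤ b x →
      y = b x) :
    ∀ d : ℝ, 0 < d →
      ¬ ∃ φ : ℝ → ℝ, φ 0 = 0 ∧
        ∀ x ∈ Icc (0 : ℝ) d, (x, φ x) ∈ G ∪ Ghat ∧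
          HasDerivWithinAt φ (f₀ (x, φ x)) (Icc (0 : ℝ) d) x := by
  intro d hd
  rintro ⟨φ, hφ0, hφ⟩
  -- Step 1: b x ≥ τ * x on [0, a]
  have hbτ : ∀ x ∈ Icc (0 : ℝ) a, τ * x ≤ b x := by
    have hmono : MonotoneOn (fun x => b x - τ * x) (Icc 0 a) := by
      apply monotoneOn_of_hasDerivWithinAt_nonneg (convex_Icc 0 a)
        (f' := fun x => b' x - τ)
      · exact fun x hx => ((hderiv x hx).sub
          ((hasDerivWithinAt_id x _).const_mul τ |>.congr_deriv (by ring))).continuousWithinAt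
      · intro x hx
        have hx' : x ∈ Icc (0:ℝ) a := interior_subset hx
        exact (((hderiv x hx').sub
          ((hasDerivWithinAt_id x _).const_mul τ |>.congr_deriv (by ring))).mono
          interior_subset)
      · intro x hx
        have hx' : x ∈ Icc (0:ℝ) a := interior_subset hx
        linarith [hb'τ x hx']
    intro x hx
    have := hmono (left_mem_Icc.2 ha.le) hx hx.1
    simp only [hb0] at this
    linarith
  -- Step 2: φ has derivative 0 at 0 within Icc 0 d, so |φ x| ≤ (τ/2) x for small x
  have h0d : (0:ℝ) ∈ Icc (0:ℝ) d := left_mem_Icc.2 hd.le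
  have hφd : HasDerivWithinAt φ 0 (Icc 0 d) 0 := by
    have := (hφ 0 h0d).2
    rwa [hφ0, hf0] at this
  rw [hasDerivWithinAt_iff_isLittleO] at hφd
  have hbd := hφd.bound (half_pos hτ)
  obtain ⟨δ, hδ, hsmall⟩ := Metric.mem_nhdsWithin_iff.mp hbd
  -- pick x₀
  set x₀ : ℝ := min d (min (δ/2) (c / (1 + τ))) with hx₀def
  have hcpos := hc.1
  have hden : (0:ℝ) < 1 + τ := by linarith
  have hx₀pos : 0 < x₀ := by
    apply lt_min hd
    exact lt_min (half_pos hδ) (div_pos hcpos hden)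
  have hx₀d : x₀ ≤ d := min_le_left _ _
  have hx₀c : x₀ ≤ c := by
    have h1 : x₀ ≤ c / (1 + τ) := le_trans (min_le_right _ _) (min_le_right _ _)
    have : c / (1 + τ) ≤ c := by
      rw [div_le_iff₀ hden]; nlinarith
    linarith
  have hx₀a : x₀ ≤ a := hx₀c.trans hc.2
  have hx₀mem : x₀ ∈ Icc (0:ℝ) d := ⟨hx₀pos.le, hx₀d⟩
  have hx₀δ : dist x₀ 0 < δ := by
    rw [Real.dist_eq, sub_zero, abs_of_pos hx₀pos]
    have : x₀ ≤ δ/2 := le_trans (min_le_right _ _) (min_le_left _ _)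
    linarith
  have hφbound : |φ x₀| ≤ τ/2 * x₀ := by
    have := hsmall ⟨Metric.mem_ball.mpr hx₀δ, hx₀mem⟩
    simp only [mem_setOf_eq, hφ0, sub_zero, smul_zero, Real.norm_eq_abs] at this
    rwa [abs_of_pos hx₀pos] at this
  have habs := abs_le.mp hφbound
  -- φ x₀ satisfies the hypotheses of honly
  have hmem := (hφ x₀ hx₀mem).1
  have hge : -c ≤ φ x₀ := by
    have : τ/2 * x₀ ≤ c := by
      have h1 : x₀ ≤ c / (1 + τ) := le_trans (min_le_right _ _) (min_le_right _ _)
      rw [le_div_iff₀ hden] at h1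
      nlinarith
    linarith [habs.1]
  have hle : φ x₀ ≤ b x₀ := by
    have hb := hbτ x₀ ⟨hx₀pos.le, hx₀a⟩
    nlinarith [habs.2]
  have heq := honly x₀ (φ x₀) hmem hx₀pos hx₀c hge hle
  have hb := hbτ x₀ ⟨hx₀pos.le, hx₀a⟩
  nlinarith [habs.2]
end

section
/- Theorem 2, case O⁺₂,<: Assume there exist a > 0, τ > 0 and a continuously differentiable function b : [0,a] → ℝ with b(0) = 0 and b'(x) ≤ −τ for all x ∈ [0,a], and there exists c ∈ (0,a] such that every point (x,y) ∈ G̃ with 0 < x ≤ c and b(x) ≤ y ≤ c lies on the curve, i.e. satisfies y = b(x). Then for every d > 0 there is no function φ : [0,d] → ℝ with φ(0) = 0 which is a solution of y' = f₀(x,y) with graph in G̃ on [0,d]. -/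
open Set Filter Topology

/-- Theorem 2, case O⁺₂,<. -/
theorem theorem2_case_O2_lt
    (G Ghat : Set (ℝ × ℝ)) (hGopen : IsOpen G) (hGhat : Ghat ⊆ frontier G)
    (f₀ : ℝ × ℝ → ℝ) (hf : ContinuousOn f₀ (G ∪ Ghat))
    (hO : ((0 : ℝ), (0 : ℝ)) ∈ Ghat) (hf0 : f₀ (0, 0) = 0)
    (a τ : ℝ) (ha : 0 < a) (hτ : 0 < τ)
    (b b' : ℝ → ℝ)
    (hderiv : ∀ x ∈ Icc (0 : ℝ) a, HasDerivWithinAt b (b' x) (Icc (0 : ℝ) a) x)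
    (hb'cont : ContinuousOn b' (Icc (0 : ℝ) a))
    (hb0 : b 0 = 0)
    (hb'τ : ∀ x ∈ Icc (0 : ℝ) a, b' x ≤ -τ)
    (c : ℝ) (hc : c ∈ Ioc (0 : ℝ) a)
    (honly : ∀ x y : ℝ, (x, y) ∈ G ∪ Ghat → 0 < x → x ≤ c → b x ≤ y → y ≤ c →
      y = b x) :
    ∀ d : ℝ, 0 < d →
      ¬ ∃ φ : ℝ → ℝ, φ 0 = 0 ∧
        ∀ x ∈ Icc (0 : ℝ) d, (x, φ x) ∈ G ∪ Ghat ∧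
          HasDerivWithinAt φ (f₀ (x, φ x)) (Icc (0 : ℝ) d) x := by
  intro d hd
  rintro ⟨φ, hφ0, hφ⟩
  -- b x ≤ -τ * x on [0, a]
  have hbcont : ContinuousOn b (Icc (0 : ℝ) a) :=
    fun x hx => (hderiv x hx).continuousWithinAt
  have hderivAt : ∀ x ∈ interior (Icc (0 : ℝ) a), HasDerivAt b (b' x) x := by
    intro x hx
    exact (hderiv x (interior_subset hx)).hasDerivAt (mem_interior_iff_mem_nhds.mp hx)
  have hdiff : DifferentiableOn ℝ b (interior (Icc (0 : ℝ) a)) :=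
    fun x hx => ((hderivAt x hx).differentiableAt).differentiableWithinAt
  have hdle : ∀ x ∈ interior (Icc (0 : ℝ) a), deriv b x ≤ -τ := by
    intro x hx
    rw [(hderivAt x hx).deriv]
    exact hb'τ x (interior_subset hx)
  have hbx : ∀ x ∈ Icc (0 : ℝ) a, b x ≤ -τ * x := by
    intro x hx
    have := (convex_Icc (0 : ℝ) a).image_sub_le_mul_sub_of_deriv_le hbcont hdiff hdle
      0 (left_mem_Icc.mpr ha.le) x hx hx.1
    rw [hb0] at this
    linarith
  -- derivative of φ at 0 is 0
  have h0mem : (0 : ℝ) ∈ Icc (0 : ℝ) d := ⟨le_refl _, hd.le⟩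
  have hder0 : HasDerivWithinAt φ 0 (Icc (0 : ℝ) d) 0 := by
    have := (hφ 0 h0mem).2
    rwa [hφ0, hf0] at this
  have hlo : (fun x => φ x - φ 0 - (x - 0) • (0 : ℝ)) =o[𝓝[Icc (0 : ℝ) d] 0]
      fun x => x - 0 := hasDerivWithinAt_iff_isLittleO.mp hder0
  have hev : ∀ᶠ x in 𝓝[Icc (0 : ℝ) d] 0, ‖φ x - φ 0 - (x - 0) • (0 : ℝ)‖ ≤
      τ / 2 * ‖x - 0‖ := hlo.def (by positivity)
  have hev' : ∀ᶠ x in 𝓝[Icc (0 : ℝ) d] 0, |φ x| ≤ τ / 2 * |x| := by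
    filter_upwards [hev] with x hx
    simpa [hφ0] using hx
  -- move to 𝓝[>] 0
  have hle : 𝓝[>] (0 : ℝ) ≤ 𝓝[Icc (0 : ℝ) d] 0 := by
    rw [← nhdsWithin_Ioc_eq_nhdsGT hd]
    exact nhdsWithin_mono _ Ioc_subset_Icc_self
  have hev2 : ∀ᶠ x in 𝓝[>] (0 : ℝ), |φ x| ≤ τ / 2 * |x| := hev'.filter_mono hle
  set m : ℝ := min (min c d) (2 * c / τ) with hm
  have hm0 : 0 < m := by
    have := hc.1
    apply lt_min (lt_min this hd)
    positivity
  have hev3 : ∀ᶠ x in 𝓝[>] (0 : ℝ), x ∈ Ioo (0 : ℝ) m :=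
    Ioo_mem_nhdsGT_of_mem ⟨le_refl _, hm0⟩
  obtain ⟨x, hx1, hx2⟩ := (hev2.and hev3).exists
  obtain ⟨hx0, hxm⟩ := hx2
  have hxc : x ≤ c := le_of_lt (lt_of_lt_of_le hxm (le_trans (min_le_left _ _) (min_le_left _ _)))
  have hxd : x ≤ d := le_of_lt (lt_of_lt_of_le hxm (le_trans (min_le_left _ _) (min_le_right _ _)))
  have hx2c : x ≤ 2 * c / τ := le_of_lt (lt_of_lt_of_le hxm (min_le_right _ _))
  have hxa : x ≤ a := le_trans hxc hc.2
  have habs : |φ x| ≤ τ / 2 * x := by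
    rwa [abs_of_pos hx0] at hx1
  have hφlb : -(τ / 2 * x) ≤ φ x := neg_le_of_abs_le habs
  have hφub : φ x ≤ τ / 2 * x := le_of_abs_le habs
  have hbxle : b x ≤ -τ * x := hbx x ⟨hx0.le, hxa⟩
  have hblt : b x < φ x := by nlinarith
  have hφc : φ x ≤ c := by
    have h2 := (le_div_iff₀ hτ).mp hx2c
    linarith
  have hmem := (hφ x ⟨hx0.le, hxd⟩).1
  have := honly x (φ x) hmem hx0 hxc hblt.le hφc
  linarith
end

section
/- Theorem 2, case B⁺₂,>,<: Assume there exist a > 0, τ > 0 and continuously differentiable functions bᵤ, bₗ : [0,a] → ℝ with bᵤ(0) = bₗ(0) = 0, bᵤ'(x) ≥ τ and bₗ'(x) ≤ −τ for all x ∈ [0,a], and there exists c ∈ (0,a] such that every point (x,y) ∈ G̃ with 0 < x ≤ c and bₗ(x) ≤ y ≤ bᵤ(x) lies on one of the two curves, i.e. satisfies y = bᵤ(x) or y = bₗ(x). Then for every d > 0 there is no function φ : [0,d] → ℝ with φ(0) = 0 which is a solution of y' = f₀(x,y) with graph in G̃ on [0,d]. -/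
open Set

private lemma line_le_of_deriv_ge {a τ : ℝ} (ha : 0 < a) (b b' : ℝ → ℝ)
    (hderiv : ∀ x ∈ Icc (0 : ℝ) a, HasDerivWithinAt b (b' x) (Icc (0 : ℝ) a) x)
    (hb0 : b 0 = 0) (hb' : ∀ x ∈ Icc (0 : ℝ) a, τ ≤ b' x) :
    ∀ x ∈ Icc (0 : ℝ) a, τ * x ≤ b x := by
  have hmono : MonotoneOn (fun x => b x - τ * x) (Icc (0 : ℝ) a) := by
    apply monotoneOn_of_hasDerivWithinAt_nonneg (f' := fun x => b' x - τ)
      (convex_Icc 0 a)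
    · exact fun x hx => ((hderiv x hx).sub ((hasDerivWithinAt_id x _).const_mul τ |>.congr_deriv
        (by ring))).continuousWithinAt
    · intro x hx
      have hx' : x ∈ Icc (0 : ℝ) a := interior_subset hx
      exact (((hderiv x hx').sub (((hasDerivWithinAt_id x (Icc (0:ℝ) a)).const_mul τ).congr_deriv
        (by ring)))).mono interior_subset
    · intro x hx
      have hx' : x ∈ Icc (0 : ℝ) a := interior_subset hx
      linarith [hb' x hx']
  intro x hx
  have h0 : (0 : ℝ) ∈ Icc (0 : ℝ) a := ⟨le_refl _, ha.le⟩
  have := hmono h0 hx hx.1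
  simp only [hb0, mul_zero, sub_zero] at this
  linarith

/-- Theorem 2, case B⁺₂,>,<. -/
theorem theorem2_case_B2_gt_lt
    (G Ghat : Set (ℝ × ℝ)) (hGopen : IsOpen G) (hGhat : Ghat ⊆ frontier G)
    (f₀ : ℝ × ℝ → ℝ) (hf : ContinuousOn f₀ (G ∪ Ghat))
    (hO : ((0 : ℝ), (0 : ℝ)) ∈ Ghat) (hf0 : f₀ (0, 0) = 0)
    (a τ : ℝ) (ha : 0 < a) (hτ : 0 < τ)
    (bu bu' bl bl' : ℝ → ℝ)
    (hderivu : ∀ x ∈ Icc (0 : ℝ) a, HasDerivWithinAt bu (bu' x) (Icc (0 : ℝ) a) x)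
    (hbu'cont : ContinuousOn bu' (Icc (0 : ℝ) a))
    (hderivl : ∀ x ∈ Icc (0 : ℝ) a, HasDerivWithinAt bl (bl' x) (Icc (0 : ℝ) a) x)
    (hbl'cont : ContinuousOn bl' (Icc (0 : ℝ) a))
    (hbu0 : bu 0 = 0) (hbl0 : bl 0 = 0)
    (hbu'τ : ∀ x ∈ Icc (0 : ℝ) a, τ ≤ bu' x)
    (hbl'τ : ∀ x ∈ Icc (0 : ℝ) a, bl' x ≤ -τ)
    (c : ℝ) (hc : c ∈ Ioc (0 : ℝ) a)
    (honly : ∀ x y : ℝ, (x, y) ∈ G ∪ Ghat → 0 < x → x ≤ c → bl x ≤ y → y ≤ bu x →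
      y = bu x ∨ y = bl x) :
    ∀ d : ℝ, 0 < d →
      ¬ ∃ φ : ℝ → ℝ, φ 0 = 0 ∧
        ∀ x ∈ Icc (0 : ℝ) d, (x, φ x) ∈ G ∪ Ghat ∧
          HasDerivWithinAt φ (f₀ (x, φ x)) (Icc (0 : ℝ) d) x := by
  intro d hd
  rintro ⟨φ, hφ0, hφ⟩
  -- bounds on bu, bl
  have hbuτ : ∀ x ∈ Icc (0 : ℝ) a, τ * x ≤ bu x :=
    line_le_of_deriv_ge ha bu bu' hderivu hbu0 hbu'τ
  have hblτ : ∀ x ∈ Icc (0 : ℝ) a, τ * x ≤ -bl x := by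
    refine line_le_of_deriv_ge ha (fun x => -bl x) (fun x => -bl' x)
      (fun x hx => (hderivl x hx).neg) (by simp [hbl0]) (fun x hx => ?_)
    show τ ≤ -bl' x
    linarith [hbl'τ x hx]
  -- derivative of φ at 0 is 0
  have hder : HasDerivWithinAt φ 0 (Icc (0 : ℝ) d) 0 := by
    have := (hφ 0 ⟨le_refl _, hd.le⟩).2
    rwa [hφ0, hf0] at this
  have hlo := hder.isLittleO
  rw [Asymptotics.isLittleO_iff] at hlo
  have hev := hlo (by positivity : (0:ℝ) < τ / 2)
  -- pass to the filter 𝓝[Ioc 0 m] 0, where m = min c d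
  set m := min c d with hm
  have hm0 : 0 < m := lt_min hc.1 hd
  have hsub : Ioc (0 : ℝ) m ⊆ Icc (0 : ℝ) d := fun x hx =>
    ⟨hx.1.le, hx.2.trans (min_le_right _ _)⟩
  have hne : (nhdsWithin (0:ℝ) (Ioc 0 m)).NeBot := by
    apply mem_closure_iff_nhdsWithin_neBot.mp
    rw [closure_Ioc hm0.ne]
    exact ⟨le_refl _, hm0.le⟩
  have hev' : ∀ᶠ x in nhdsWithin (0:ℝ) (Ioc 0 m),
      ‖φ x - φ 0 - (x - 0) • (0:ℝ)‖ ≤ τ / 2 * ‖x - 0‖ :=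
    hev.filter_mono (nhdsWithin_mono _ hsub)
  have hself : ∀ᶠ x in nhdsWithin (0:ℝ) (Ioc 0 m), x ∈ Ioc (0:ℝ) m :=
    self_mem_nhdsWithin
  obtain ⟨x, hx1, hx2⟩ := (hev'.and hself).exists
  obtain ⟨hx0, hxm⟩ := hx2
  simp only [hφ0, smul_zero, sub_zero, Real.norm_eq_abs, abs_of_pos hx0] at hx1
  have hxc : x ≤ c := hxm.trans (min_le_left _ _)
  have hxa : x ∈ Icc (0:ℝ) a := ⟨hx0.le, hxc.trans hc.2⟩
  have habs : |φ x| ≤ τ / 2 * x := hx1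
  have h1 : φ x ≤ τ / 2 * x := (abs_le.mp habs).2
  have h2 : -(τ / 2 * x) ≤ φ x := (abs_le.mp habs).1
  have hbux := hbuτ x hxa
  have hblx := hblτ x hxa
  have hmem := (hφ x ⟨hx0.le, hxm.trans (min_le_right _ _)⟩).1
  have hlt1 : φ x < bu x := by nlinarith
  have hgt1 : bl x < φ x := by nlinarith
  rcases honly x (φ x) hmem hx0 hxc hgt1.le hlt1.le with h | h
  · exact absurd h hlt1.ne
  · exact absurd h hgt1.ne'
end

section
/- Example 1 (σ = 1, non-existence): For every d > 0 there is no function φ : [0,d] → ℝ with φ(0) = 0 such that for every x ∈ [0,d] one has |φ(x)| ≤ 2x² and φ has derivative 4·√(2x² − |φ(x)|) + 6x at x within [0,d] (one-sided at the endpoints). -/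
open Set

/-! A solution satisfies `φ' ≥ 6x`, so comparison with `3x²` from the origin gives
`φ(x) ≥ 3x² > 2x²` for `x > 0`, which pushes the graph out of the domain `|y| ≤ 2x²`. -/

theorem sub_le_sub_of_hasDerivWithinAt_le {f g f' g' : ℝ → ℝ} {a b : ℝ} (hab : a ≤ b)
    (hf : ∀ x ∈ Icc a b, HasDerivWithinAt f (f' x) (Icc a b) x)
    (hg : ∀ x ∈ Icc a b, HasDerivWithinAt g (g' x) (Icc a b) x)
    (hle : ∀ x ∈ Ioo a b, g' x ≤ f' x) :
    g b - g a ≤ f b - f a := by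
  have hmono : MonotoneOn (f - g) (Icc a b) := by
    refine monotoneOn_of_hasDerivWithinAt_nonneg (f' := f' - g') (convex_Icc a b)
      (fun x hx => ((hf x hx).sub (hg x hx)).continuousWithinAt)
      (fun x hx => ?_) (fun x hx => ?_)
    · exact ((hf x (interior_subset hx)).sub (hg x (interior_subset hx))).mono interior_subset
    · rw [interior_Icc] at hx
      exact sub_nonneg.mpr (hle x hx)
  have hend := hmono (left_mem_Icc.mpr hab) (right_mem_Icc.mpr hab) hab
  simp only [Pi.sub_apply] at hend
  linarith

/-- Example 1 (σ = 1): non-existence of a solution of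
`y' = 4√(2x² − |y|) + 6x` through the origin in the right half-plane. -/
theorem example1_sigma_pos_nonexistence :
    ∀ d : ℝ, 0 < d →
      ¬ ∃ φ : ℝ → ℝ, φ 0 = 0 ∧
        ∀ x ∈ Icc (0 : ℝ) d, |φ x| ≤ 2 * x ^ 2 ∧
          HasDerivWithinAt φ (4 * Real.sqrt (2 * x ^ 2 - |φ x|) + 6 * x)
            (Icc (0 : ℝ) d) x := by
  rintro d hd ⟨φ, hφ0, hφ⟩
  have hsq : ∀ x ∈ Icc (0 : ℝ) d, HasDerivWithinAt (fun x => 3 * x ^ 2) (6 * x) (Icc 0 d) x :=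
    fun x _ => ((hasDerivAt_pow 2 x).const_mul 3).hasDerivWithinAt.congr_deriv (by ring)
  have hcomp : 3 * d ^ 2 - 3 * 0 ^ 2 ≤ φ d - φ 0 :=
    sub_le_sub_of_hasDerivWithinAt_le hd.le (fun x hx => (hφ x hx).2) hsq
      fun x _ => le_add_of_nonneg_left (by positivity)
  have hdom := (hφ d (right_mem_Icc.mpr hd.le)).1
  nlinarith [le_abs_self (φ d)]
end

section
/- Example 3, equation (8₁) (non-existence in both half-planes): For every d > 0 there is no function φ : [0,d] → ℝ with φ(0) = 0 such that for every x ∈ [0,d] one has φ(x) ≥ 2x² and φ has derivative 4x·√(φ(x) − 2x²) at x within [0,d]; likewise there is no such function φ : [−d, 0] → ℝ with φ(0) = 0, φ(x) ≥ 2x² and derivative 4x·√(φ(x) − 2x²) within [−d,0] at every x ∈ [−d,0]. -/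
open Set

lemma aux_right_nonexist (d : ℝ) (hd : 0 < d) :
    ¬ ∃ φ : ℝ → ℝ, φ 0 = 0 ∧
        ∀ x ∈ Icc (0 : ℝ) d, 2 * x ^ 2 ≤ φ x ∧
          HasDerivWithinAt φ (4 * x * Real.sqrt (φ x - 2 * x ^ 2))
            (Icc (0 : ℝ) d) x := by
  rintro ⟨φ, hφ0, hφ⟩
  set ψ : ℝ → ℝ := fun x => φ x - 2 * x ^ 2 with hψdef
  have hψ0 : ψ 0 = 0 := by simp [hψdef, hφ0]
  have hψd : ∀ x ∈ Icc (0 : ℝ) d,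
      HasDerivWithinAt ψ (4 * x * Real.sqrt (ψ x) - 4 * x) (Icc (0 : ℝ) d) x := by
    intro x hx
    have h1 := (hφ x hx).2
    have h2 : HasDerivWithinAt (fun y : ℝ => 2 * y ^ 2) (4 * x) (Icc (0 : ℝ) d) x := by
      have : HasDerivAt (fun y : ℝ => 2 * y ^ 2) (2 * (2 * x ^ 1)) x :=
        (hasDerivAt_pow 2 x).const_mul 2
      have h4 : HasDerivAt (fun y : ℝ => 2 * y ^ 2) (4 * x) x := by
        convert this using 1; ring
      exact h4.hasDerivWithinAt
    exact h1.sub h2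
  -- ψ is continuous within at 0, so ψ < 1 near 0
  have hcont : ContinuousWithinAt ψ (Icc (0 : ℝ) d) 0 :=
    (hψd 0 ⟨le_refl _, hd.le⟩).continuousWithinAt
  have hmem : {x | ψ x < 1} ∈ nhdsWithin (0 : ℝ) (Icc (0 : ℝ) d) := by
    have : Iio (1 : ℝ) ∈ nhds (ψ 0) := by
      rw [hψ0]; exact Iio_mem_nhds one_pos
    exact hcont this
  rw [Metric.mem_nhdsWithin_iff] at hmem
  obtain ⟨ε, hε, hball⟩ := hmem
  set e : ℝ := min d (ε / 2) with hedef
  have he : 0 < e := lt_min hd (by linarith)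
  have hed : e ≤ d := min_le_left _ _
  have hsub : Icc (0 : ℝ) e ⊆ Icc (0 : ℝ) d := Icc_subset_Icc le_rfl hed
  have hlt1 : ∀ x ∈ Icc (0 : ℝ) e, ψ x < 1 := by
    intro x hx
    apply hball
    constructor
    · rw [Metric.mem_ball, Real.dist_eq, sub_zero, abs_of_nonneg hx.1]
      have : e ≤ ε / 2 := min_le_right _ _
      linarith [hx.2]
    · exact hsub hx
  -- ψ is antitone on Icc 0 e
  have hanti : AntitoneOn ψ (Icc (0 : ℝ) e) := by
    apply antitoneOn_of_deriv_nonpos (convex_Icc _ _)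
    · intro x hx
      exact ((hψd x (hsub hx)).continuousWithinAt).mono hsub
    · intro x hx
      rw [interior_Icc] at hx
      have hnd : Icc (0 : ℝ) d ∈ nhds x := Icc_mem_nhds hx.1 (lt_of_lt_of_le hx.2 hed)
      exact ((hψd x (hsub ⟨hx.1.le, hx.2.le⟩)).hasDerivAt hnd).differentiableAt.differentiableWithinAt
    · intro x hx
      rw [interior_Icc] at hx
      have hnd : Icc (0 : ℝ) d ∈ nhds x := Icc_mem_nhds hx.1 (lt_of_lt_of_le hx.2 hed)
      have hda := (hψd x (hsub ⟨hx.1.le, hx.2.le⟩)).hasDerivAt hnd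
      rw [hda.deriv]
      have hs : Real.sqrt (ψ x) ≤ 1 := Real.sqrt_le_one.mpr (hlt1 x ⟨hx.1.le, hx.2.le⟩).le
      nlinarith [hx.1.le]
  -- hence ψ = 0 on Icc 0 e
  have hzero : ∀ x ∈ Icc (0 : ℝ) e, ψ x = 0 := by
    intro x hx
    have h1 : ψ x ≤ 0 := by
      have := hanti (left_mem_Icc.2 he.le) hx hx.1
      rwa [hψ0] at this
    have h2 : 0 ≤ ψ x := by
      have := (hφ x (hsub hx)).1
      simp only [hψdef]; linarith
    linarith
  -- contradiction at x0 = e/2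
  set x0 : ℝ := e / 2 with hx0def
  have hx0e : x0 ∈ Icc (0 : ℝ) e := ⟨by positivity, by simp [hx0def]; linarith⟩
  have hx0d : x0 ∈ Icc (0 : ℝ) d := hsub hx0e
  have hψx0 : ψ x0 = 0 := hzero x0 hx0e
  have hnd : Icc (0 : ℝ) d ∈ nhds x0 :=
    Icc_mem_nhds (by positivity) (by simp only [hx0def]; linarith)
  have hd1 : HasDerivAt φ 0 x0 := by
    have := (hφ x0 hx0d).2
    have heq : 4 * x0 * Real.sqrt (φ x0 - 2 * x0 ^ 2) = 0 := by
      have : φ x0 - 2 * x0 ^ 2 = 0 := hψx0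
      rw [this, Real.sqrt_zero, mul_zero]
    rw [heq] at this
    exact this.hasDerivAt hnd
  have hEq : φ =ᶠ[nhds x0] fun x => 2 * x ^ 2 := by
    have hne : Icc (0 : ℝ) e ∈ nhds x0 :=
      Icc_mem_nhds (by positivity) (by simp only [hx0def]; linarith)
    filter_upwards [hne] with x hx
    have := hzero x hx
    simp only [hψdef] at this
    linarith
  have hd2 : HasDerivAt (fun x : ℝ => 2 * x ^ 2) 0 x0 := hd1.congr_of_eventuallyEq hEq.symm
  have hd3 : HasDerivAt (fun x : ℝ => 2 * x ^ 2) (4 * x0) x0 := by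
    have : HasDerivAt (fun y : ℝ => 2 * y ^ 2) (2 * (2 * x0 ^ 1)) x0 :=
      (hasDerivAt_pow 2 x0).const_mul 2
    convert this using 1; ring
  have : (0 : ℝ) = 4 * x0 := hd2.unique hd3
  have : x0 = 0 := by linarith
  simp only [hx0def] at this
  linarith

lemma aux_left_nonexist (d : ℝ) (hd : 0 < d) :
    ¬ ∃ φ : ℝ → ℝ, φ 0 = 0 ∧
        ∀ x ∈ Icc (-d) (0 : ℝ), 2 * x ^ 2 ≤ φ x ∧
          HasDerivWithinAt φ (4 * x * Real.sqrt (φ x - 2 * x ^ 2))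
            (Icc (-d) (0 : ℝ)) x := by
  rintro ⟨φ, hφ0, hφ⟩
  set ψ : ℝ → ℝ := fun x => φ x - 2 * x ^ 2 with hψdef
  have hψ0 : ψ 0 = 0 := by simp [hψdef, hφ0]
  have hψd : ∀ x ∈ Icc (-d) (0 : ℝ),
      HasDerivWithinAt ψ (4 * x * Real.sqrt (ψ x) - 4 * x) (Icc (-d) (0 : ℝ)) x := by
    intro x hx
    have h1 := (hφ x hx).2
    have h2 : HasDerivWithinAt (fun y : ℝ => 2 * y ^ 2) (4 * x) (Icc (-d) (0 : ℝ)) x := by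
      have : HasDerivAt (fun y : ℝ => 2 * y ^ 2) (2 * (2 * x ^ 1)) x :=
        (hasDerivAt_pow 2 x).const_mul 2
      have h4 : HasDerivAt (fun y : ℝ => 2 * y ^ 2) (4 * x) x := by
        convert this using 1; ring
      exact h4.hasDerivWithinAt
    exact h1.sub h2
  have hcont : ContinuousWithinAt ψ (Icc (-d) (0 : ℝ)) 0 :=
    (hψd 0 ⟨by linarith, le_refl _⟩).continuousWithinAt
  have hmem : {x | ψ x < 1} ∈ nhdsWithin (0 : ℝ) (Icc (-d) (0 : ℝ)) := by
    have : Iio (1 : ℝ) ∈ nhds (ψ 0) := by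
      rw [hψ0]; exact Iio_mem_nhds one_pos
    exact hcont this
  rw [Metric.mem_nhdsWithin_iff] at hmem
  obtain ⟨ε, hε, hball⟩ := hmem
  set e : ℝ := min d (ε / 2) with hedef
  have he : 0 < e := lt_min hd (by linarith)
  have hed : e ≤ d := min_le_left _ _
  have hsub : Icc (-e) (0 : ℝ) ⊆ Icc (-d) (0 : ℝ) := Icc_subset_Icc (by linarith) le_rfl
  have hlt1 : ∀ x ∈ Icc (-e) (0 : ℝ), ψ x < 1 := by
    intro x hx
    apply hball
    constructor
    · rw [Metric.mem_ball, Real.dist_eq, sub_zero, abs_of_nonpos hx.2]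
      have : e ≤ ε / 2 := min_le_right _ _
      have := hx.1
      linarith
    · exact hsub hx
  have hmono : MonotoneOn ψ (Icc (-e) (0 : ℝ)) := by
    apply monotoneOn_of_deriv_nonneg (convex_Icc _ _)
    · intro x hx
      exact ((hψd x (hsub hx)).continuousWithinAt).mono hsub
    · intro x hx
      rw [interior_Icc] at hx
      have hnd : Icc (-d) (0 : ℝ) ∈ nhds x :=
        Icc_mem_nhds (by have := hx.1; linarith) hx.2
      exact ((hψd x (hsub ⟨hx.1.le, hx.2.le⟩)).hasDerivAt hnd).differentiableAt.differentiableWithinAt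
    · intro x hx
      rw [interior_Icc] at hx
      have hnd : Icc (-d) (0 : ℝ) ∈ nhds x :=
        Icc_mem_nhds (by have := hx.1; linarith) hx.2
      have hda := (hψd x (hsub ⟨hx.1.le, hx.2.le⟩)).hasDerivAt hnd
      rw [hda.deriv]
      have hs : Real.sqrt (ψ x) ≤ 1 := Real.sqrt_le_one.mpr (hlt1 x ⟨hx.1.le, hx.2.le⟩).le
      nlinarith [hx.2.le]
  have hzero : ∀ x ∈ Icc (-e) (0 : ℝ), ψ x = 0 := by
    intro x hx
    have h1 : ψ x ≤ 0 := by
      have := hmono hx (right_mem_Icc.2 (by linarith)) hx.2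
      rwa [hψ0] at this
    have h2 : 0 ≤ ψ x := by
      have := (hφ x (hsub hx)).1
      simp only [hψdef]; linarith
    linarith
  set x0 : ℝ := -(e / 2) with hx0def
  have hx0e : x0 ∈ Icc (-e) (0 : ℝ) := ⟨by simp only [hx0def]; linarith, by simp only [hx0def]; linarith⟩
  have hx0d : x0 ∈ Icc (-d) (0 : ℝ) := hsub hx0e
  have hψx0 : ψ x0 = 0 := hzero x0 hx0e
  have hnd : Icc (-d) (0 : ℝ) ∈ nhds x0 :=
    Icc_mem_nhds (by simp only [hx0def]; linarith) (by simp only [hx0def]; linarith)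
  have hd1 : HasDerivAt φ 0 x0 := by
    have := (hφ x0 hx0d).2
    have heq : 4 * x0 * Real.sqrt (φ x0 - 2 * x0 ^ 2) = 0 := by
      have : φ x0 - 2 * x0 ^ 2 = 0 := hψx0
      rw [this, Real.sqrt_zero, mul_zero]
    rw [heq] at this
    exact this.hasDerivAt hnd
  have hEq : φ =ᶠ[nhds x0] fun x => 2 * x ^ 2 := by
    have hne : Icc (-e) (0 : ℝ) ∈ nhds x0 :=
      Icc_mem_nhds (by simp only [hx0def]; linarith) (by simp only [hx0def]; linarith)
    filter_upwards [hne] with x hx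
    have := hzero x hx
    simp only [hψdef] at this
    linarith
  have hd2 : HasDerivAt (fun x : ℝ => 2 * x ^ 2) 0 x0 := hd1.congr_of_eventuallyEq hEq.symm
  have hd3 : HasDerivAt (fun x : ℝ => 2 * x ^ 2) (4 * x0) x0 := by
    have : HasDerivAt (fun y : ℝ => 2 * y ^ 2) (2 * (2 * x0 ^ 1)) x0 :=
      (hasDerivAt_pow 2 x0).const_mul 2
    convert this using 1; ring
  have : (0 : ℝ) = 4 * x0 := hd2.unique hd3
  have : x0 = 0 := by linarith
  simp only [hx0def] at this
  linarith

/-- Example 3, equation (8₁): non-existence of a solution of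
`y' = 4x√(y − 2x²)` through the origin, in both half-planes. -/
theorem example3_eq1_nonexistence :
    ∀ d : ℝ, 0 < d →
      (¬ ∃ φ : ℝ → ℝ, φ 0 = 0 ∧
        ∀ x ∈ Icc (0 : ℝ) d, 2 * x ^ 2 ≤ φ x ∧
          HasDerivWithinAt φ (4 * x * Real.sqrt (φ x - 2 * x ^ 2))
            (Icc (0 : ℝ) d) x) ∧
      (¬ ∃ φ : ℝ → ℝ, φ 0 = 0 ∧
        ∀ x ∈ Icc (-d) (0 : ℝ), 2 * x ^ 2 ≤ φ x ∧
          HasDerivWithinAt φ (4 * x * Real.sqrt (φ x - 2 * x ^ 2))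
            (Icc (-d) (0 : ℝ)) x) := by
  intro d hd
  exact ⟨aux_right_nonexist d hd, aux_left_nonexist d hd⟩
end

section
/- Example 3, equation (8₃) (continuum of mixed solutions): For every C ≥ 0, the function φ_C : ℝ → ℝ defined by φ_C(x) = 2x² for x ≤ C and φ_C(x) = 3(x − C/3)² + 2C²/3 for x ≥ C satisfies: φ_C(0) = 0; φ_C(x) ≥ 2x² for all x ∈ ℝ (so its graph lies in G̃); φ_C is differentiable on ℝ; and for every x ∈ ℝ the derivative of φ_C at x equals 2·√(φ_C(x) − 2x²) + 4x. Hence the boundary Cauchy problem at the origin has a continuum of solutions, one for each C ≥ 0. -/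
/-!
Writing `(x - C)⁺ = max (x - C) 0`, the function is `φ_C x = 2 x² + ((x - C)⁺)²`. The square of a
positive part is differentiable with derivative `2 (x - C)⁺` (at the kink both one-sided slopes
vanish), and `(x - C)⁺ = √(φ_C x - 2 x²)`, which is exactly the equation.
-/

open Set Filter Asymptotics Topology

lemma hasDerivAt_max_zero_sq (t : ℝ) :
    HasDerivAt (fun s : ℝ => max s 0 ^ 2) (2 * max t 0) t := by
  rcases lt_trichotomy t 0 with ht | rfl | ht
  · have hzero : (fun s : ℝ => max s 0 ^ 2) =ᶠ[𝓝 t] fun _ => 0 := by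
      filter_upwards [Iio_mem_nhds ht] with s hs
      simp [max_eq_right (le_of_lt (mem_Iio.mp hs))]
    simpa [max_eq_right ht.le] using (hasDerivAt_const t (0 : ℝ)).congr_of_eventuallyEq hzero
  · rw [hasDerivAt_iff_isLittleO_nhds_zero]
    have hbound : (fun h : ℝ => max h 0 ^ 2) =O[𝓝 0] fun h => h ^ 2 :=
      IsBigO.of_bound 1 <| Eventually.of_forall fun h => by
        rw [one_mul, norm_pow, norm_pow]
        gcongr
        rw [Real.norm_eq_abs, Real.norm_eq_abs, abs_of_nonneg (le_max_right h 0)]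
        exact max_le (le_abs_self h) (abs_nonneg h)
    simpa using hbound.trans_isLittleO (isLittleO_pow_id one_lt_two)
  · have hsq : (fun s : ℝ => max s 0 ^ 2) =ᶠ[𝓝 t] fun s => s ^ 2 := by
      filter_upwards [Ioi_mem_nhds ht] with s hs
      rw [max_eq_left (le_of_lt (mem_Ioi.mp hs))]
    rw [max_eq_left ht.le]
    simpa using (hasDerivAt_pow 2 t).congr_of_eventuallyEq hsq

lemma hasDerivAt_max_sub_zero_sq (c x : ℝ) :
    HasDerivAt (fun y : ℝ => max (y - c) 0 ^ 2) (2 * max (x - c) 0) x := by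
  simpa [Function.comp_def] using
    (hasDerivAt_max_zero_sq (x - c)).comp x ((hasDerivAt_id x).sub_const c)

lemma ite_le_two_mul_sq_eq_add_max_sq (C x : ℝ) :
    (if x ≤ C then 2 * x ^ 2 else 3 * (x - C / 3) ^ 2 + 2 * C ^ 2 / 3) =
      2 * x ^ 2 + max (x - C) 0 ^ 2 := by
  split_ifs with hx
  · simp [max_eq_right (sub_nonpos.mpr hx)]
  · rw [max_eq_left (by linarith)]
    ring

/-- Example 3, equation (8₃): for every `C ≥ 0` the function
`φ_C(x) = 2x²` (x ≤ C), `φ_C(x) = 3(x − C/3)² + 2C²/3` (x ≥ C) is a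
solution of `y' = 2√(y − 2x²) + 4x` through the origin on all of `ℝ`. -/
theorem example3_eq3_continuum_of_solutions :
    ∀ C : ℝ, 0 ≤ C → ∀ φ : ℝ → ℝ,
      (∀ x : ℝ, φ x = if x ≤ C then 2 * x ^ 2
        else 3 * (x - C / 3) ^ 2 + 2 * C ^ 2 / 3) →
      φ 0 = 0 ∧
      (∀ x : ℝ, 2 * x ^ 2 ≤ φ x) ∧
      (∀ x : ℝ, HasDerivAt φ (2 * Real.sqrt (φ x - 2 * x ^ 2) + 4 * x) x) := by
  intro C hC φ hφ
  obtain rfl : φ = fun x => 2 * x ^ 2 + max (x - C) 0 ^ 2 :=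
    funext fun x => (hφ x).trans (ite_le_two_mul_sq_eq_add_max_sq C x)
  refine ⟨by simp [hC], fun x => le_add_of_nonneg_right (sq_nonneg _), fun x => ?_⟩
  have hsqrt : Real.sqrt (2 * x ^ 2 + max (x - C) 0 ^ 2 - 2 * x ^ 2) = max (x - C) 0 := by
    rw [add_sub_cancel_left, Real.sqrt_sq (le_max_right _ _)]
  rw [hsqrt, add_comm]
  exact (((hasDerivAt_pow 2 x).const_mul 2).add (hasDerivAt_max_sub_zero_sq C x)).congr_deriv
    (by ring)
end
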